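/- arXiv:2303.04122 — 6 statements merged into one kernel-verified Lean document; each statement's English description precedes it below -/
import Mathlib

section
/- For every integer n ≥ 1 and k ≥ 1, with N = n + 1/2, the even-indexed power sums S_{2j} = Σ_{r=1}^{n} r^{2j} satisfy Σ_{j=1}^{k} 4^j · C(2k+1, 2j) · S_{2j} = 4^k · N^{2k+1} − N. -/
/-!
For `u` in a commutative ring, `(u + 1) ^ (2k+1) - (u - 1) ^ (2k+1)` is twice the even part
`∑ⱼ C(2k+1, 2j) u^{2j}` of the binomial expansion. Taking `u = 2r` and summing over
`r = 1, …, n` telescopes the left side to `(2n+1)^{2k+1} - 1`, while the right side becomes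
`2 ∑ⱼ 4^j C(2k+1, 2j) S_{2j}`; the term `j = 0` is `n`, and `4^k N^{2k+1} = (2n+1)^{2k+1} / 2`.
-/

open Finset

theorem Finset.sum_range_two_mul {M : Type*} [AddCommMonoid M] (f : ℕ → M) (m : ℕ) :
    ∑ i ∈ range (2 * m), f i = ∑ j ∈ range m, (f (2 * j) + f (2 * j + 1)) := by
  induction m with
  | zero => simp
  | succ m ih =>
    rw [show 2 * (m + 1) = 2 * m + 1 + 1 by ring, sum_range_succ, sum_range_succ, ih,
      sum_range_succ, add_assoc]

theorem Finset.sum_Icc_sub_cast_sub_one {R M : Type*} [Ring R] [AddCommGroup M] (h : R → M)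
    (n : ℕ) : ∑ r ∈ Icc 1 n, (h r - h (r - 1)) = h n - h 0 := by
  induction n with
  | zero => simp
  | succ n ih =>
    rw [sum_Icc_succ_top (by omega), ih]
    push_cast
    rw [add_sub_cancel_right]
    abel

theorem add_one_pow_sub_sub_one_pow {R : Type*} [CommRing R] (u : R) (k : ℕ) :
    (u + 1) ^ (2 * k + 1) - (u - 1) ^ (2 * k + 1) =
      2 * ∑ j ∈ range (k + 1), ((2 * k + 1).choose (2 * j) : R) * u ^ (2 * j) := by
  rw [sub_eq_add_neg u, add_pow, add_pow, ← sum_sub_distrib,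
    show 2 * k + 1 + 1 = 2 * (k + 1) by ring, sum_range_two_mul, mul_sum]
  refine sum_congr rfl fun j hj => ?_
  have hj : j ≤ k := Nat.lt_succ_iff.mp (mem_range.mp hj)
  rw [show 2 * k + 1 - 2 * j = 2 * (k - j) + 1 by omega,
    show 2 * k + 1 - (2 * j + 1) = 2 * (k - j) by omega]
  simp only [one_pow, pow_succ, pow_mul]
  ring

theorem two_mul_sum_four_pow_choose_mul_sum_pow {R : Type*} [CommRing R] (n k : ℕ) :
    2 * ∑ j ∈ range (k + 1), (4 : R) ^ j * ((2 * k + 1).choose (2 * j) : R) *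
      ∑ r ∈ Icc 1 n, (r : R) ^ (2 * j) = (2 * n + 1) ^ (2 * k + 1) - 1 := by
  calc _ = ∑ r ∈ Icc 1 n, 2 * ∑ j ∈ range (k + 1),
        ((2 * k + 1).choose (2 * j) : R) * (2 * r) ^ (2 * j) := by
        simp_rw [mul_sum]
        rw [sum_comm]
        refine sum_congr rfl fun r _ => sum_congr rfl fun j _ => ?_
        rw [mul_pow, pow_mul (2 : R)]
        norm_num
        ring
    _ = ∑ r ∈ Icc 1 n, ((2 * (r : R) + 1) ^ (2 * k + 1) - (2 * (r - 1) + 1) ^ (2 * k + 1)) := by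
        refine sum_congr rfl fun r _ => ?_
        rw [show 2 * ((r : R) - 1) + 1 = 2 * r - 1 by ring, add_one_pow_sub_sub_one_pow]
    _ = _ := by
        rw [sum_Icc_sub_cast_sub_one (fun x : R => (2 * x + 1) ^ (2 * k + 1))]
        simp

theorem stmt_0_general (n k : ℕ) :
    ∑ j ∈ Finset.Icc 1 k, (4 : ℚ) ^ j * (Nat.choose (2 * k + 1) (2 * j)) *
      (∑ r ∈ Finset.Icc 1 n, (r : ℚ) ^ (2 * j)) =
    4 ^ k * ((n : ℚ) + 1 / 2) ^ (2 * k + 1) - ((n : ℚ) + 1 / 2) := by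
  have hsum := two_mul_sum_four_pow_choose_mul_sum_pow (R := ℚ) n k
  rw [range_eq_Ico, sum_eq_sum_Ico_succ_bot (by omega : 0 < k + 1), zero_add,
    Ico_add_one_right_eq_Icc] at hsum
  simp only [pow_zero, mul_zero, Nat.choose_zero_right, Nat.cast_one, mul_one, sum_const,
    Nat.card_Icc, add_tsub_cancel_right, nsmul_eq_mul, one_mul] at hsum
  have hN : (4 : ℚ) ^ k * ((n : ℚ) + 1 / 2) ^ (2 * k + 1) = (2 * n + 1) ^ (2 * k + 1) / 2 := by
    rw [show (4 : ℚ) ^ k = 2 ^ (2 * k + 1) / 2 by rw [pow_succ, pow_mul]; norm_num,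
      div_mul_eq_mul_div, ← mul_pow, show 2 * ((n : ℚ) + 1 / 2) = 2 * n + 1 by ring]
  rw [hN]
  linarith

theorem stmt_0 (n k : ℕ) (hn : 1 ≤ n) (hk : 1 ≤ k) :
    ∑ j ∈ Finset.Icc 1 k, (4 : ℚ) ^ j * (Nat.choose (2 * k + 1) (2 * j)) *
      (∑ r ∈ Finset.Icc 1 n, (r : ℚ) ^ (2 * j)) =
    4 ^ k * ((n : ℚ) + 1 / 2) ^ (2 * k + 1) - ((n : ℚ) + 1 / 2) :=
  stmt_0_general n k
end

section
/- For every integer n ≥ 1 and k ≥ 1, with N = n + 1/2, the odd-indexed power sums S_{2j−1} = Σ_{r=1}^{n} r^{2j−1} satisfy Σ_{j=1}^{k} 4^j · C(2k, 2j−1) · S_{2j−1} = 4^k · N^{2k} − 1. -/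
/-! Expanding `(2r + 1)^(2k) - (2r - 1)^(2k)` binomially kills the even powers of `2r` and leaves
`∑ j, 4^j C(2k, 2j-1) r^(2j-1)`; summing over `r = 1, …, n` telescopes to `(2n + 1)^(2k) - 1`. -/

open Finset

theorem sum_range_two_mul_add_one_of_even {M : Type*} [AddCommMonoid M] (f : ℕ → M)
    (hf : ∀ i, Even i → f i = 0) (k : ℕ) :
    ∑ i ∈ range (2 * k + 1), f i = ∑ j ∈ Icc 1 k, f (2 * j - 1) := by
  induction k with
  | zero => simp [hf 0 Even.zero]
  | succ k ih =>
    rw [show 2 * (k + 1) + 1 = 2 * k + 1 + 1 + 1 by ring, sum_range_succ, sum_range_succ, ih,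
      sum_Icc_succ_top (by omega), hf (2 * k + 1 + 1) ⟨k + 1, by ring⟩, add_zero,
      show 2 * (k + 1) - 1 = 2 * k + 1 by omega]

theorem add_one_pow_two_mul_sub_sub_one_pow_two_mul {R : Type*} [CommRing R] (x : R) (k : ℕ) :
    (x + 1) ^ (2 * k) - (x - 1) ^ (2 * k) =
      ∑ j ∈ Icc 1 k, 2 * ((2 * k).choose (2 * j - 1) : R) * x ^ (2 * j - 1) := by
  have hsub : (x - 1) ^ (2 * k) = (-x + 1) ^ (2 * k) := by
    rw [show -x + 1 = -(x - 1) by ring, (even_two_mul k).neg_pow]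
  rw [hsub, add_pow, add_pow, ← sum_sub_distrib, sum_range_two_mul_add_one_of_even]
  · refine sum_congr rfl fun j hj => ?_
    have hodd : Odd (2 * j - 1) := ⟨j - 1, by grind⟩
    rw [hodd.neg_pow]
    ring
  · intro i hi
    rw [hi.neg_pow]
    ring

theorem sum_four_pow_mul_choose_mul_pow {R : Type*} [CommRing R] (y : R) (k : ℕ) :
    ∑ j ∈ Icc 1 k, 4 ^ j * ((2 * k).choose (2 * j - 1) : R) * y ^ (2 * j - 1) =
      (2 * y + 1) ^ (2 * k) - (2 * y - 1) ^ (2 * k) := by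
  rw [add_one_pow_two_mul_sub_sub_one_pow_two_mul]
  refine sum_congr rfl fun j hj => ?_
  obtain ⟨i, rfl⟩ : ∃ i, j = i + 1 := Nat.exists_eq_add_of_le' (mem_Icc.mp hj).1
  rw [show 2 * (i + 1) - 1 = 2 * i + 1 by omega, mul_pow, pow_succ (2 : R), pow_mul]
  ring

theorem sum_Icc_two_mul_add_one_pow_sub {R : Type*} [CommRing R] (n m : ℕ) :
    ∑ r ∈ Icc 1 n, ((2 * r + 1 : R) ^ m - (2 * r - 1) ^ m) = (2 * n + 1) ^ m - 1 := by
  induction n with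
  | zero => simp
  | succ n ih =>
    rw [sum_Icc_succ_top (by omega), ih]
    push_cast
    ring

theorem stmt_1_general (n k : ℕ) :
    ∑ j ∈ Finset.Icc 1 k, (4 : ℚ) ^ j * (Nat.choose (2 * k) (2 * j - 1)) *
      (∑ r ∈ Finset.Icc 1 n, (r : ℚ) ^ (2 * j - 1)) =
    4 ^ k * ((n : ℚ) + 1 / 2) ^ (2 * k) - 1 := by
  calc _ = ∑ r ∈ Icc 1 n, ∑ j ∈ Icc 1 k,
          (4 : ℚ) ^ j * ((2 * k).choose (2 * j - 1) : ℚ) * (r : ℚ) ^ (2 * j - 1) := by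
        simp_rw [mul_sum]
        exact sum_comm
    _ = ∑ r ∈ Icc 1 n, ((2 * r + 1 : ℚ) ^ (2 * k) - (2 * r - 1) ^ (2 * k)) := by
        simp_rw [sum_four_pow_mul_choose_mul_pow]
    _ = (2 * n + 1) ^ (2 * k) - 1 := sum_Icc_two_mul_add_one_pow_sub n (2 * k)
    _ = _ := by
        rw [pow_mul, pow_mul, ← mul_pow]
        ring

theorem stmt_1 (n k : ℕ) (hn : 1 ≤ n) (hk : 1 ≤ k) :
    ∑ j ∈ Finset.Icc 1 k, (4 : ℚ) ^ j * (Nat.choose (2 * k) (2 * j - 1)) *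
      (∑ r ∈ Finset.Icc 1 n, (r : ℚ) ^ (2 * j - 1)) =
    4 ^ k * ((n : ℚ) + 1 / 2) ^ (2 * k) - 1 :=
  stmt_1_general n k
end

section
/- For every integer n ≥ 0 and every integer j ≥ 0, the j-th derivative of the Chebyshev polynomial of the second kind U_n evaluated at 1 equals 2^j · j! · C(n + j + 1, 2j + 1). -/
/-!
Differentiating the Chebyshev equation `(1 - x²) U'' - 3x U' + n(n + 2) U = 0` `k` times
and evaluating at `x = 1` kills the leading term and leaves the first-order recurrence
`(2k + 3) U⁽ᵏ⁺¹⁾(1) = ((n + 1)² - (k + 1)²) U⁽ᵏ⁾(1)`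
(`iterate_derivative_U_eval_one_recurrence`).
The closed form satisfies the same recurrence with the same initial value `U(1) = n + 1`, so the
two agree over `ℤ`, where `2k + 3` can be cancelled; every other ring receives the result along
`ℤ → R`.
-/

open Polynomial Polynomial.Chebyshev

theorem Nat.add_one_choose_add_two_mul_mul (m k : ℕ) :
    (m + 1).choose (k + 2) * (k + 2) * (k + 1) = (m + 1) * (m - k) * m.choose k := by
  rw [← Nat.add_one_mul_choose_eq, mul_assoc, Nat.choose_succ_right_eq]
  ring

theorem Nat.cast_add_one_choose_add_two_mul_mul {R : Type*} [CommRing R] (m k : ℕ) :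
    ((m + 1).choose (k + 2) * (k + 2) * (k + 1) : R) = (m + 1) * ((m : R) - k) * m.choose k := by
  rcases le_or_gt k m with hkm | hmk
  · rw [← Nat.cast_sub hkm]
    exact_mod_cast congrArg (Nat.cast : ℕ → R) (Nat.add_one_choose_add_two_mul_mul m k)
  · simp [Nat.choose_eq_zero_of_lt hmk, Nat.choose_eq_zero_of_lt (by omega : m + 1 < k + 2)]

theorem two_pow_mul_factorial_mul_choose_recurrence {R : Type*} [CommRing R] (n j : ℕ) :
    (2 * j + 3 : R) *
        (2 ^ (j + 1) * (j + 1).factorial * (n + (j + 1) + 1).choose (2 * (j + 1) + 1)) =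
      (((n : R) + 1) ^ 2 - ((j : R) + 1) ^ 2) *
        (2 ^ j * j.factorial * (n + j + 1).choose (2 * j + 1)) := by
  have h := Nat.cast_add_one_choose_add_two_mul_mul (R := R) (n + j + 1) (2 * j + 1)
  rw [show n + j + 1 + 1 = n + (j + 1) + 1 by ring,
    show 2 * j + 1 + 2 = 2 * (j + 1) + 1 by ring] at h
  push_cast at h
  rw [Nat.factorial_succ]
  push_cast
  linear_combination (2 ^ j * j.factorial : R) * h

theorem iterate_derivative_U_int_eval_one (n j : ℕ) :
    (derivative^[j] (U ℤ n)).eval 1 = 2 ^ j * j.factorial * (n + j + 1).choose (2 * j + 1) := by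
  induction j with
  | zero => simp [U_eval_one]
  | succ j ih =>
    refine mul_left_cancel₀ (by positivity : (2 * j + 3 : ℤ) ≠ 0) ?_
    rw [two_pow_mul_factorial_mul_choose_recurrence, ← ih]
    exact_mod_cast iterate_derivative_U_eval_one_recurrence (R := ℤ) n j

theorem iterate_derivative_U_eval_one_eq_choose {R : Type*} [CommRing R] (n j : ℕ) :
    (derivative^[j] (U R n)).eval 1 = 2 ^ j * j.factorial * (n + j + 1).choose (2 * j + 1) := by
  rw [← map_U (Int.castRingHom R), iterate_derivative_map, eval_one_map,
    iterate_derivative_U_int_eval_one]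
  simp

theorem stmt_8 (n j : ℕ) :
    (Polynomial.derivative^[j] (Polynomial.Chebyshev.U ℚ (n : ℤ))).eval 1 =
    2 ^ j * (j.factorial : ℚ) * (Nat.choose (n + j + 1) (2 * j + 1)) :=
  iterate_derivative_U_eval_one_eq_choose n j
end

section
/- For every integer n ≥ 1, Σ_{r=1}^{n} r^2 = (1/4)·Σ_{j=1}^{n} (−1)^{n+j} · 4^j · j · C(n+j, 2j). -/
/-!
The sums `b n = ∑ⱼ C(n+j, 2j) Xʲ` are the Morgan–Voyce polynomials, which satisfy
`b (n+2) = (X + 2) b (n+1) - b n`. At `X = -4` this becomes `u (n+2) = -2 u (n+1) - u n`, whose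
solutions are `(-1)ⁿ` times an affine function of `n`; so `b n (-4) = (-1)ⁿ (2n+1)`.
Differentiating the recurrence and evaluating again gives
`6 b' n (-4) = (-1)ⁿ⁺¹ n (n+1) (2n+1)`, and the right-hand side of the identity is
`(1/4) (-1)ⁿ (X b' n)(-4) = (-1)ⁿ⁺¹ b' n (-4)`.
-/

open Polynomial Finset

theorem Nat.choose_add_three_add_choose_add_one (n k : ℕ) :
    (n + k + 3).choose (2 * k + 2) + (n + k + 1).choose (2 * k + 2) =
      (n + k + 1).choose (2 * k) + 2 * (n + k + 2).choose (2 * k + 2) := by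
  simp only [Nat.choose_succ_succ, show 2 * k + 1 = 2 * k + 0 + 1 by rfl]
  omega

namespace Polynomial

variable {R : Type*} [CommRing R]

theorem coeff_X_mul_derivative (p : R[X]) (i : ℕ) :
    (X * derivative p).coeff i = i * p.coeff i := by
  cases i with
  | zero => simp
  | succ i => rw [coeff_X_mul, coeff_derivative, mul_comm]; push_cast; rfl

theorem eval_X_mul_derivative_eq_sum_range {p : R[X]} {N : ℕ} (hp : p.natDegree < N) (x : R) :
    (X * derivative p).eval x = ∑ i ∈ range N, i * p.coeff i * x ^ i := by
  have hdeg : (X * derivative p).natDegree < N := by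
    refine lt_of_le_of_lt (natDegree_le_iff_coeff_eq_zero.2 fun i hi => ?_) hp
    rw [coeff_X_mul_derivative, coeff_eq_zero_of_natDegree_lt hi, mul_zero]
  simp only [eval_eq_sum_range' hdeg, coeff_X_mul_derivative]

variable (R) in
noncomputable def morganVoyce (n : ℕ) : R[X] :=
  ∑ j ∈ range (n + 1), C ((n + j).choose (2 * j) : R) * X ^ j

theorem coeff_morganVoyce (n k : ℕ) :
    (morganVoyce R n).coeff k = (n + k).choose (2 * k) := by
  simp only [morganVoyce, finsetSum_coeff, coeff_C_mul_X_pow]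
  rw [sum_ite_eq]
  split_ifs with h
  · rfl
  · rw [Nat.choose_eq_zero_of_lt (by rw [mem_range] at h; omega), Nat.cast_zero]

theorem natDegree_morganVoyce_le (n : ℕ) : (morganVoyce R n).natDegree ≤ n :=
  natDegree_le_iff_coeff_eq_zero.2 fun k hk => by
    rw [coeff_morganVoyce, Nat.choose_eq_zero_of_lt (by omega), Nat.cast_zero]

theorem morganVoyce_add_two (n : ℕ) :
    morganVoyce R (n + 2) = (X + 2) * morganVoyce R (n + 1) - morganVoyce R n := by
  ext (_ | k)
  · norm_num [coeff_morganVoyce]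
  · rw [coeff_sub, add_mul, coeff_add, coeff_X_mul]
    simp only [coeff_ofNat_mul, coeff_morganVoyce, eq_sub_iff_add_eq,
      show n + 2 + (k + 1) = n + k + 3 by ring, show n + 1 + (k + 1) = n + k + 2 by ring,
      show n + (k + 1) = n + k + 1 by ring, show n + 1 + k = n + k + 1 by ring,
      show 2 * (k + 1) = 2 * k + 2 by ring]
    exact_mod_cast congrArg (Nat.cast : ℕ → R) (Nat.choose_add_three_add_choose_add_one n k)

theorem derivative_morganVoyce_add_two (n : ℕ) :
    derivative (morganVoyce R (n + 2)) =
      morganVoyce R (n + 1) + (X + 2) * derivative (morganVoyce R (n + 1)) -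
        derivative (morganVoyce R n) := by
  rw [morganVoyce_add_two, derivative_sub, derivative_mul]
  simp only [derivative_add, derivative_X, derivative_ofNat, add_zero, one_mul]

theorem eval_morganVoyce_neg_four (n : ℕ) :
    (morganVoyce R n).eval (-4) = (-1) ^ n * (2 * n + 1) := by
  induction n using Nat.twoStepInduction with
  | zero => simp [morganVoyce]
  | one => norm_num [morganVoyce, sum_range_succ]
  | more n ih₀ ih₁ =>
    rw [morganVoyce_add_two, eval_sub, eval_mul, ih₀, ih₁]
    push_cast
    simp only [eval_add, eval_X, eval_ofNat]
    ring

theorem eval_derivative_morganVoyce_neg_four (n : ℕ) :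
    6 * (derivative (morganVoyce R n)).eval (-4) =
      (-1) ^ (n + 1) * (n * (n + 1) * (2 * n + 1)) := by
  induction n using Nat.twoStepInduction with
  | zero => simp [morganVoyce]
  | one => norm_num [morganVoyce, sum_range_succ]
  | more n ih₀ ih₁ =>
    rw [derivative_morganVoyce_add_two, eval_sub, eval_add, eval_mul, eval_morganVoyce_neg_four]
    push_cast at ih₁ ⊢
    simp only [eval_add, eval_X, eval_ofNat]
    linear_combination (-2) * ih₁ - ih₀

theorem sum_Icc_neg_one_pow_mul_choose_eq_eval (n : ℕ) :
    ∑ j ∈ Icc 1 n, (-1 : R) ^ (n + j) * 4 ^ j * j * (n + j).choose (2 * j) =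
      (-1) ^ n * (X * derivative (morganVoyce R n)).eval (-4) := by
  rw [eval_X_mul_derivative_eq_sum_range (Nat.lt_succ_of_le (natDegree_morganVoyce_le n)),
    mul_sum]
  have hsub : Icc 1 n ⊆ range (n + 1) := fun j hj => by
    simp only [mem_Icc, mem_range] at hj ⊢; omega
  rw [← sum_subset hsub fun j hj hj' => ?_]
  · refine sum_congr rfl fun j _ => ?_
    rw [coeff_morganVoyce, neg_pow (4 : R), pow_add]
    ring
  · obtain rfl : j = 0 := by simp only [mem_Icc, mem_range] at hj hj'; omega
    simp

end Polynomial

theorem Finset.sum_Icc_sq_mul_six {S : Type*} [CommSemiring S] (n : ℕ) :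
    (∑ r ∈ Icc 1 n, (r : S) ^ 2) * 6 = n * (n + 1) * (2 * n + 1) := by
  induction n with
  | zero => simp
  | succ n ih =>
    rw [sum_Icc_succ_top (by omega), add_mul, ih]
    push_cast
    ring

theorem stmt_13_general (n : ℕ) :
    (∑ r ∈ Finset.Icc 1 n, (r : ℚ) ^ 2) =
    (1 / 4) * ∑ j ∈ Finset.Icc 1 n, (-1 : ℚ) ^ (n + j) * 4 ^ j * j *
      (Nat.choose (n + j) (2 * j)) := by
  rw [sum_Icc_neg_one_pow_mul_choose_eq_eval, eval_mul, eval_X]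
  have hS := sum_Icc_sq_mul_six (S := ℚ) n
  have hD := eval_derivative_morganVoyce_neg_four (R := ℚ) n
  have hsign : ((-1 : ℚ) ^ n) ^ 2 = 1 := by rw [← pow_mul, pow_mul', neg_one_sq, one_pow]
  linear_combination (1 / 6) * hS + ((-1) ^ n / 6) * hD - (n * (n + 1) * (2 * n + 1) / 6) * hsign

theorem stmt_13 (n : ℕ) (hn : 1 ≤ n) :
    (∑ r ∈ Finset.Icc 1 n, (r : ℚ) ^ 2) =
    (1 / 4) * ∑ j ∈ Finset.Icc 1 n, (-1 : ℚ) ^ (n + j) * 4 ^ j * j *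
      (Nat.choose (n + j) (2 * j)) :=
  stmt_13_general n
end

section
/- For every integer n ≥ 1, Σ_{r=1}^{n} r^4 = (1/8)·Σ_{j=1}^{n} (−1)^{n+j} · 4^j · j·(3j − 1) · C(n+j, 2j). -/
/-!
At `x = -4` the right-hand side is `(-1)ⁿ` times the weighted Morgan–Voyce sum
`∑ w(j) C(n+j, 2j) xʲ` with weight `w(j) = j(3j-1)`. Pascal's rule couples such a sum with its
odd companion `∑ w(j+1) C(n+j+1, 2j+1) xʲ` in a first-order recurrence in `n`. For the weights
`1`, `j`, `j²` the recurrences at `x = -4` are solved by `(-1)ⁿ` times explicit polynomials in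
`n`, and the identity reduces to comparing with the closed form of `∑ r⁴`.
-/

open Finset

section MorganVoyce

variable {R : Type*} [CommRing R]

/- Weighted Morgan–Voyce polynomials: for `w = 1` these are `b_n(x) = ∑ C(n+i, 2i) xⁱ` and
`B_n(x) = ∑ C(n+i+1, 2i+1) xⁱ`. The coefficient of `xⁱ` in `B_n` carries the weight `w (i+1)`,
so that Pascal's rule gives `b_{n+1} = b_n + x B_n` for every weight. -/
def morganVoyceb (w : ℕ → R) (x : R) (n : ℕ) : R :=
  ∑ i ∈ range (n + 1), w i * (n + i).choose (2 * i) * x ^ i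

def morganVoyceB (w : ℕ → R) (x : R) (n : ℕ) : R :=
  ∑ i ∈ range (n + 1), w (i + 1) * (n + i + 1).choose (2 * i + 1) * x ^ i

variable (w : ℕ → R) (x : R)

@[simp]
theorem morganVoyceb_zero : morganVoyceb w x 0 = w 0 := by
  simp [morganVoyceb]

@[simp]
theorem morganVoyceB_zero : morganVoyceB w x 0 = w 1 := by
  simp [morganVoyceB]

theorem morganVoyceb_eq_sum_range (n : ℕ) :
    morganVoyceb w x n = ∑ i ∈ range (n + 2), w i * (n + i).choose (2 * i) * x ^ i := by
  rw [sum_range_succ, Nat.choose_eq_zero_of_lt (by omega), Nat.cast_zero, mul_zero, zero_mul,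
    add_zero, morganVoyceb]

theorem morganVoyceB_eq_sum_range (n : ℕ) :
    morganVoyceB w x n =
      ∑ i ∈ range (n + 2), w (i + 1) * (n + i + 1).choose (2 * i + 1) * x ^ i := by
  rw [sum_range_succ, Nat.choose_eq_zero_of_lt (by omega), Nat.cast_zero, mul_zero, zero_mul,
    add_zero, morganVoyceB]

theorem morganVoyceb_succ (n : ℕ) :
    morganVoyceb w x (n + 1) = morganVoyceb w x n + x * morganVoyceB w x n := by
  rw [morganVoyceb_eq_sum_range w x n, morganVoyceb]
  rw [sum_range_succ', sum_range_succ' (fun i => w i * ((n + i).choose (2 * i) : R) * x ^ i),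
    morganVoyceB, mul_sum, add_zero, add_right_comm (∑ k ∈ _, _), ← sum_add_distrib]
  congr 1
  · refine sum_congr rfl fun i _ => ?_
    rw [show n + 1 + (i + 1) = n + i + 1 + 1 by omega, show 2 * (i + 1) = 2 * i + 1 + 1 by omega,
      Nat.choose_succ_succ', show n + (i + 1) = n + i + 1 by omega]
    push_cast
    ring
  · simp

theorem morganVoyceB_succ (n : ℕ) :
    morganVoyceB w x (n + 1) =
      morganVoyceB w x n + morganVoyceb (fun i => w (i + 1)) x (n + 1) := by
  rw [morganVoyceB_eq_sum_range w x n, morganVoyceB, morganVoyceb, ← sum_add_distrib]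
  refine sum_congr rfl fun i _ => ?_
  rw [show n + 1 + i + 1 = n + i + 1 + 1 by omega, Nat.choose_succ_succ',
    show n + i + 1 = n + 1 + i by omega]
  push_cast
  ring

theorem morganVoyceb_add (u v : ℕ → R) (n : ℕ) :
    morganVoyceb (u + v) x n = morganVoyceb u x n + morganVoyceb v x n := by
  simp only [morganVoyceb, Pi.add_apply, add_mul, sum_add_distrib]

theorem morganVoyceb_smul (a : R) (n : ℕ) :
    morganVoyceb (a • w) x n = a * morganVoyceb w x n := by
  simp only [morganVoyceb, Pi.smul_apply, smul_eq_mul, mul_sum, mul_assoc]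

variable {w x}

/- For a polynomial weight, `E` collects the sums for weights of lower degree that appear when
the weight is shifted, so the closed forms can be found degree by degree. -/
theorem morganVoyce_eq_of_recurrence {F G E : ℕ → R}
    (hshift : ∀ n, morganVoyceb (fun i => w (i + 1)) x n = morganVoyceb w x n + E n)
    (hF₀ : F 0 = w 0) (hG₀ : G 0 = w 1)
    (hF : ∀ n, F (n + 1) = F n + x * G n) (hG : ∀ n, G (n + 1) = G n + F (n + 1) + E (n + 1))
    (n : ℕ) : morganVoyceb w x n = F n ∧ morganVoyceB w x n = G n := by
  induction n with
  | zero => exact ⟨by simp [hF₀], by simp [hG₀]⟩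
  | succ n ih =>
    have hb : morganVoyceb w x (n + 1) = F (n + 1) := by
      rw [morganVoyceb_succ, ih.1, ih.2, hF]
    refine ⟨hb, ?_⟩
    rw [morganVoyceB_succ, hshift, hb, ih.2, hG, add_assoc]

end MorganVoyce

theorem morganVoyce_one_neg_four (n : ℕ) :
    morganVoyceb (fun _ => (1 : ℚ)) (-4) n = (-1) ^ n * (2 * n + 1) ∧
      morganVoyceB (fun _ => (1 : ℚ)) (-4) n = (-1) ^ n * (n + 1) := by
  apply morganVoyce_eq_of_recurrence (E := fun _ => 0) (fun _ => by simp)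
  all_goals intros; push_cast; ring

theorem morganVoyce_id_neg_four (n : ℕ) :
    morganVoyceb (fun i => (i : ℚ)) (-4) n = (-1) ^ n * (2 * n * (n + 1) * (2 * n + 1) / 3) ∧
      morganVoyceB (fun i => (i : ℚ)) (-4) n =
        (-1) ^ n * ((n + 1) * (2 * n ^ 2 + 4 * n + 3) / 3) := by
  have hshift : (fun i : ℕ => ((i + 1 : ℕ) : ℚ)) = (fun i : ℕ => (i : ℚ)) + fun _ => 1 := by
    funext i
    simp
  apply morganVoyce_eq_of_recurrence (E := fun n : ℕ => (-1 : ℚ) ^ n * (2 * n + 1))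
  · intro n
    rw [hshift, morganVoyceb_add, (morganVoyce_one_neg_four n).1]
  all_goals intros; push_cast; ring

theorem morganVoyce_sq_neg_four (n : ℕ) :
    morganVoyceb (fun i => (i : ℚ) ^ 2) (-4) n =
        (-1) ^ n * (2 * n * (n + 1) * (2 * n + 1) * (2 * n ^ 2 + 2 * n + 1) / 15) ∧
      morganVoyceB (fun i => (i : ℚ) ^ 2) (-4) n =
        (-1) ^ n * ((n + 1) * (4 * n ^ 4 + 16 * n ^ 3 + 34 * n ^ 2 + 36 * n + 15) / 15) := by
  have hshift : (fun i : ℕ => ((i + 1 : ℕ) : ℚ) ^ 2) =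
      ((fun i : ℕ => (i : ℚ) ^ 2) + (2 : ℚ) • fun i : ℕ => (i : ℚ)) + fun _ => 1 := by
    funext i
    simp only [Pi.add_apply, Pi.smul_apply, smul_eq_mul]
    push_cast
    ring
  apply morganVoyce_eq_of_recurrence
    (E := fun n : ℕ => (-1 : ℚ) ^ n * (4 * n * (n + 1) * (2 * n + 1) / 3 + (2 * n + 1)))
  · intro n
    rw [hshift, morganVoyceb_add, morganVoyceb_add, morganVoyceb_smul,
      (morganVoyce_one_neg_four n).1, (morganVoyce_id_neg_four n).1]
    ring
  all_goals intros; push_cast; ring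

theorem sum_Icc_pow_four (n : ℕ) :
    ∑ r ∈ Icc 1 n, (r : ℚ) ^ 4 = (6 * n ^ 5 + 15 * n ^ 4 + 10 * n ^ 3 - n) / 30 := by
  induction n with
  | zero => simp
  | succ n ih =>
    rw [sum_Icc_succ_top (by omega), ih]
    push_cast
    ring

theorem stmt_14_general (n : ℕ) :
    (∑ r ∈ Finset.Icc 1 n, (r : ℚ) ^ 4) =
    (1 / 8) * ∑ j ∈ Finset.Icc 1 n, (-1 : ℚ) ^ (n + j) * 4 ^ j * j * (3 * j - 1) *
      (Nat.choose (n + j) (2 * j)) := by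
  have hweight : (fun j : ℕ => (j : ℚ) * (3 * j - 1)) =
      (3 : ℚ) • (fun j : ℕ => (j : ℚ) ^ 2) + (-1 : ℚ) • fun j : ℕ => (j : ℚ) := by
    funext j
    simp only [Pi.add_apply, Pi.smul_apply, smul_eq_mul]
    ring
  have hsum : ∑ j ∈ Icc 1 n, (-1 : ℚ) ^ (n + j) * 4 ^ j * j * (3 * j - 1) * (n + j).choose (2 * j)
      = (-1) ^ n * morganVoyceb (fun j : ℕ => (j : ℚ) * (3 * j - 1)) (-4) n := by
    rw [morganVoyceb, Nat.range_succ_eq_Icc_zero, ← insert_Icc_add_one_left_eq_Icc n.zero_le,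
      sum_insert (by simp), mul_add, mul_sum]
    simp only [Nat.cast_zero, zero_mul, add_zero, zero_add, mul_zero]
    refine sum_congr rfl fun j _ => ?_
    rw [neg_pow (4 : ℚ), pow_add]
    ring
  rw [hsum, hweight, morganVoyceb_add, morganVoyceb_smul, morganVoyceb_smul,
    (morganVoyce_sq_neg_four n).1, (morganVoyce_id_neg_four n).1, sum_Icc_pow_four]
  rcases n.even_or_odd with hn | hn <;> rw [hn.neg_one_pow] <;> ring

theorem stmt_14 (n : ℕ) (hn : 1 ≤ n) :
    (∑ r ∈ Finset.Icc 1 n, (r : ℚ) ^ 4) =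
    (1 / 8) * ∑ j ∈ Finset.Icc 1 n, (-1 : ℚ) ^ (n + j) * 4 ^ j * j * (3 * j - 1) *
      (Nat.choose (n + j) (2 * j)) :=
  stmt_14_general n
end

section
/- For every integer n ≥ 1, Σ_{r=1}^{n} r^6 = (1/16)·Σ_{j=1}^{n} (−1)^{n+j} · 4^j · j·(15j^2 − 15j + 4) · C(n+j, 2j). -/
/-!
Let `S n` (`binomSum`) be the alternating binomial sum on the right without the factor `1/16`.
A WZ certificate (`wzCert`, from Zeilberger's algorithm) telescopes the second difference
`(n+2)^6 (S(n+1) - S n) - (n+1)^6 (S(n+2) - S(n+1))` termwise in `j`, so it vanishes.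
Hence `(S(n+1) - S n) / (n+1)^6` is constant, equal to `S 1 - S 0 = 16`, and summing the
differences gives `S n = 16 ∑ r^6`.
-/

open Finset

namespace Nat

variable {R : Type*} [CommRing R]

theorem cast_choose_add_two_add_two_mul (m k : ℕ) :
    ((m + 2).choose (k + 2) : R) * ((k + 1) * (k + 2)) = (m + 1) * (m + 2) * m.choose k := by
  have h₁ : ((m + 1) * m.choose k : R) = (m + 1).choose (k + 1) * (k + 1) := by
    norm_cast; exact congrArg _ (add_one_mul_choose_eq m k)
  have h₂ : ((m + 2) * (m + 1).choose (k + 1) : R) = (m + 2).choose (k + 2) * (k + 2) := by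
    norm_cast; exact congrArg _ (add_one_mul_choose_eq (m + 1) (k + 1))
  linear_combination -(k + 1 : R) * h₂ - (m + 2 : R) * h₁

theorem cast_choose_succ_add_two_mul (m k : ℕ) :
    ((m + 1).choose (k + 2) : R) * ((k + 1) * (k + 2)) = (m + 1) * (m - k) * m.choose k := by
  have h₁ : ((m + 1) * m.choose k : R) = (m + 1).choose (k + 1) * (k + 1) := by
    norm_cast; exact congrArg _ (add_one_mul_choose_eq m k)
  have hp : ((m + 2).choose (k + 2) : R) = (m + 1).choose (k + 1) + (m + 1).choose (k + 2) := by
    rw [choose_succ_succ', cast_add]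
  linear_combination cast_choose_add_two_add_two_mul (R := R) m k
    - (k + 1) * (k + 2) * hp + (k + 2) * h₁

theorem cast_choose_add_two_mul (m k : ℕ) :
    (m.choose (k + 2) : R) * ((k + 1) * (k + 2)) = (m - k) * (m - k - 1) * m.choose k := by
  have h₁ : ((m + 1) * m.choose k : R) = (m + 1).choose (k + 1) * (k + 1) := by
    norm_cast; exact congrArg _ (add_one_mul_choose_eq m k)
  have hp₁ : ((m + 1).choose (k + 1) : R) = m.choose k + m.choose (k + 1) := by
    rw [choose_succ_succ', cast_add]
  have hp₂ : ((m + 1).choose (k + 2) : R) = m.choose (k + 1) + m.choose (k + 2) := by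
    rw [choose_succ_succ', cast_add]
  linear_combination cast_choose_succ_add_two_mul (R := R) m k
    - (k + 1) * (k + 2) * hp₂ + (k + 1) * (k + 2) * hp₁ + (k + 2) * h₁

end Nat

theorem sum_Icc_one_eq_sum_range {M : Type*} [AddCommMonoid M] (f : ℕ → M) (N : ℕ) :
    ∑ j ∈ Icc 1 N, f j = ∑ i ∈ range N, f (i + 1) := by
  rw [range_eq_Ico, sum_Ico_add', zero_add, Ico_add_one_right_eq_Icc]

def binomTerm (n j : ℕ) : ℚ :=
  (-1 : ℚ) ^ (n + j) * 4 ^ j * j * (15 * (j : ℚ) ^ 2 - 15 * j + 4) * (Nat.choose (n + j) (2 * j))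

def binomSum (n : ℕ) : ℚ := ∑ j ∈ Icc 1 n, binomTerm n j

def wzCert (n i : ℕ) : ℚ :=
  let u : ℚ := (n + 1) * (n + 2)
  (-1) ^ (n + i + 1) * 4 ^ (i + 1) * i * u *
    ((15 * i ^ 2 - 15 * i + 4) * u ^ 2 + (3 * i - 1) * (5 * i - 1) * u + i * (3 * i - 1)) *
    (n + i + 1).choose (2 * i)

theorem binomTerm_eq_zero_of_lt {n j : ℕ} (h : n < j) : binomTerm n j = 0 := by
  simp [binomTerm, Nat.choose_eq_zero_of_lt (by omega : n + j < 2 * j)]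

theorem binomSum_eq_sum_range {n N : ℕ} (h : n ≤ N) :
    binomSum n = ∑ i ∈ range N, binomTerm n (i + 1) := by
  rw [binomSum, ← sum_Icc_one_eq_sum_range]
  exact sum_subset (Icc_subset_Icc_right h) fun j hj hjn =>
    binomTerm_eq_zero_of_lt (by simp_all)

theorem wzCert_zero_right (n : ℕ) : wzCert n 0 = 0 := by
  simp [wzCert]

theorem wzCert_add_two (n : ℕ) : wzCert n (n + 2) = 0 := by
  simp [wzCert, Nat.choose_eq_zero_of_lt (by omega : n + (n + 2) + 1 < 2 * (n + 2))]

theorem wz_identity (n i : ℕ) :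
    (n + 2) ^ 6 * (binomTerm (n + 1) (i + 1) - binomTerm n (i + 1))
      - (n + 1) ^ 6 * (binomTerm (n + 2) (i + 1) - binomTerm (n + 1) (i + 1))
      = wzCert n (i + 1) - wzCert n i := by
  -- all five binomials are rational multiples of `C(n + i + 1, 2 i)`
  have hD : ((2 * i : ℕ) + 1) * ((2 * i : ℕ) + 2 : ℚ) ≠ 0 := by positivity
  simp only [binomTerm, wzCert]
  rw [show n + (i + 1) = n + i + 1 by ring, show n + 1 + (i + 1) = n + i + 1 + 1 by ring,
    show n + 2 + (i + 1) = n + i + 1 + 2 by ring, show 2 * (i + 1) = 2 * i + 2 by ring,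
    eq_div_of_mul_eq hD (Nat.cast_choose_add_two_mul (n + i + 1) _),
    eq_div_of_mul_eq hD (Nat.cast_choose_succ_add_two_mul (n + i + 1) _),
    eq_div_of_mul_eq hD (Nat.cast_choose_add_two_add_two_mul (n + i + 1) _)]
  push_cast
  field_simp
  ring

theorem binomSum_recurrence (n : ℕ) :
    (n + 2) ^ 6 * (binomSum (n + 1) - binomSum n)
      = (n + 1) ^ 6 * (binomSum (n + 2) - binomSum (n + 1)) := by
  have telescope := sum_congr (s₁ := range (n + 2)) rfl fun i _ => wz_identity n i
  rw [sum_range_sub, wzCert_add_two, wzCert_zero_right, sub_zero] at telescope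
  simp only [sum_sub_distrib, ← mul_sum] at telescope
  rw [binomSum_eq_sum_range (N := n + 2) (by omega), binomSum_eq_sum_range (N := n + 2) (by omega),
    binomSum_eq_sum_range (N := n + 2) le_rfl]
  linear_combination telescope

theorem binomSum_succ_sub (n : ℕ) : binomSum (n + 1) - binomSum n = 16 * ((n : ℚ) + 1) ^ 6 := by
  induction n with
  | zero => norm_num [binomSum, binomTerm]
  | succ n ih =>
    have hpos : ((n : ℚ) + 1) ^ 6 ≠ 0 := by positivity
    apply mul_left_cancel₀ hpos
    push_cast
    linear_combination (binomSum_recurrence n).symm + ((n : ℚ) + 2) ^ 6 * ih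

theorem binomSum_eq (n : ℕ) : binomSum n = 16 * ∑ r ∈ Icc 1 n, (r : ℚ) ^ 6 := by
  induction n with
  | zero => simp [binomSum]
  | succ n ih =>
    rw [sum_Icc_succ_top (by omega)]
    push_cast
    linear_combination binomSum_succ_sub n + ih

theorem stmt_15_general (n : ℕ) :
    (∑ r ∈ Finset.Icc 1 n, (r : ℚ) ^ 6) =
    (1 / 16) * ∑ j ∈ Finset.Icc 1 n, (-1 : ℚ) ^ (n + j) * 4 ^ j * j *
      (15 * (j : ℚ) ^ 2 - 15 * j + 4) * (Nat.choose (n + j) (2 * j)) := by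
  change _ = 1 / 16 * binomSum n
  rw [binomSum_eq]
  ring

theorem stmt_15 (n : ℕ) (hn : 1 ≤ n) :
    (∑ r ∈ Finset.Icc 1 n, (r : ℚ) ^ 6) =
    (1 / 16) * ∑ j ∈ Finset.Icc 1 n, (-1 : ℚ) ^ (n + j) * 4 ^ j * j *
      (15 * (j : ℚ) ^ 2 - 15 * j + 4) * (Nat.choose (n + j) (2 * j)) :=
  stmt_15_general n
end
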